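/- arXiv:1802.06858 — 6 statements merged into one kernel-verified Lean document; each statement's English description precedes it below -/
import Mathlib

section
/- For q > 0, T > 0, the series Σ_{k=0}^∞ (q/q)^k · e^{-qT}(1-e^{-qT})^k · [k/q + T - k·(T e^{-qT}/(1-e^{-qT}))] converges and equals (e^{qT} - 1)/q; i.e., in the constant-gap model without impatience, E[Y] = (e^{qT}-1)/q. -/
open Real

/-- Mean service time in model B₁ without impatience: the series
`Σ_{k=0}^∞ (q/q)^k e^{-qT}(1-e^{-qT})^k [k/q + T - k·(T e^{-qT}/(1-e^{-qT}))]`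
converges and equals `(e^{qT} - 1)/q`. -/
theorem mean_service_time_B1 (q T : ℝ) (hq : 0 < q) (hT : 0 < T) :
    Summable (fun k : ℕ =>
      (q / q) ^ k * (Real.exp (-q * T) * (1 - Real.exp (-q * T)) ^ k) *
        ((k : ℝ) / q + T - (k : ℝ) * (T * Real.exp (-q * T) / (1 - Real.exp (-q * T))))) ∧
    ∑' k : ℕ,
      (q / q) ^ k * (Real.exp (-q * T) * (1 - Real.exp (-q * T)) ^ k) *
        ((k : ℝ) / q + T - (k : ℝ) * (T * Real.exp (-q * T) / (1 - Real.exp (-q * T))))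
      = (Real.exp (q * T) - 1) / q := by
  set a := Real.exp (-q * T) with ha
  have ha0 : 0 < a := Real.exp_pos _
  have ha1 : a < 1 := by
    rw [ha]
    exact Real.exp_lt_one_iff.mpr (by nlinarith)
  set r := 1 - a with hr
  have hr0 : 0 < r := by simp only [hr]; linarith
  have hr1 : r < 1 := by simp only [hr]; linarith
  have hnr : ‖r‖ < 1 := by rw [Real.norm_eq_abs, abs_lt]; constructor <;> linarith
  have hqq : q / q = 1 := div_self hq.ne'
  have hterm : ∀ k : ℕ, (q / q) ^ k * (a * r ^ k) * ((k : ℝ) / q + T - (k : ℝ) * (T * a / r))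
      = (a * T) * r ^ k + (a * (1 / q - T * a / r)) * ((k : ℝ) * r ^ k) := by
    intro k; rw [hqq]; ring
  have hs1 : Summable (fun k : ℕ => (a * T) * r ^ k) :=
    (summable_geometric_of_norm_lt_one hnr).mul_left _
  have hs2 : Summable (fun k : ℕ => (a * (1 / q - T * a / r)) * ((k : ℝ) * r ^ k)) :=
    ((summable_pow_mul_geometric_of_norm_lt_one 1 hnr).congr (by intro n; simp)).mul_left _
  have hsum : Summable (fun k : ℕ =>
      (q / q) ^ k * (a * r ^ k) * ((k : ℝ) / q + T - (k : ℝ) * (T * a / r))) := by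
    apply ((hs1.add hs2).congr)
    intro k; rw [hterm k]
  refine ⟨hsum, ?_⟩
  have htsum : ∑' k : ℕ,
      (q / q) ^ k * (a * r ^ k) * ((k : ℝ) / q + T - (k : ℝ) * (T * a / r))
      = (a * T) * (1 - r)⁻¹ + (a * (1 / q - T * a / r)) * (r / (1 - r) ^ 2) := by
    rw [tsum_congr hterm, Summable.tsum_add hs1 hs2, tsum_mul_left, tsum_mul_left,
      tsum_geometric_of_lt_one (le_of_lt hr0) hr1,
      tsum_coe_mul_geometric_of_norm_lt_one hnr]
  rw [htsum]
  have h1r : (1 : ℝ) - r = a := by simp [hr]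
  have hexp : Real.exp (q * T) = a⁻¹ := by
    rw [ha, ← Real.exp_neg]; ring_nf
  rw [h1r, hexp]
  field_simp
  ring
end

section
/- In the resampling model B₂ without impatience, where each attempt independently draws a critical headway T from a fixed distribution, the mean service time is E[Y] = (1 - E[e^{-qT}]) / (q · E[e^{-qT}]), where the defining series is E[Y] = Σ_{k=0}^∞ (1-E[e^{-qT}])^k [ E[T e^{-qT}] + E[e^{-qT}] ( k/q - k·E[T e^{-qT}]/(1-E[e^{-qT}]) ) ]. -/
open MeasureTheory Real

/-- Mean service time in the resampling model B₂ without impatience: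
with `m = E[e^{-qT}]` and `a = E[T e^{-qT}]`, the defining series
`Σ_{k=0}^∞ (1-m)^k [a + m(k/q - k·a/(1-m))]` equals `(1-m)/(q m)`. -/
theorem mean_service_time_B2 {Ω : Type*} [MeasurableSpace Ω] (μ : Measure Ω)
    [IsProbabilityMeasure μ] (T : Ω → ℝ) (q : ℝ) (hq : 0 < q)
    (hTnn : ∀ ω, 0 ≤ T ω)
    (hint : Integrable (fun ω => T ω * Real.exp (-q * T ω)) μ)
    (m a : ℝ)
    (hm : m = ∫ ω, Real.exp (-q * T ω) ∂μ)
    (ha : a = ∫ ω, T ω * Real.exp (-q * T ω) ∂μ)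
    (hm0 : 0 < m) (hm1 : m < 1) :
    ∑' k : ℕ, (1 - m) ^ k * (a + m * ((k : ℝ) / q - (k : ℝ) * a / (1 - m)))
      = (1 - m) / (q * m) := by
  have hx0 : (0:ℝ) < 1 - m := by linarith
  have hx1 : 1 - m < 1 := by linarith
  have hxne : (1:ℝ) - m ≠ 0 := ne_of_gt hx0
  have hqne : q ≠ 0 := ne_of_gt hq
  have hnorm : ‖(1:ℝ) - m‖ < 1 := by rw [Real.norm_eq_abs, abs_of_pos hx0]; exact hx1
  have hsg : Summable (fun k : ℕ => (1 - m) ^ k) :=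
    summable_geometric_of_norm_lt_one hnorm
  have hsk : Summable (fun k : ℕ => (k : ℝ) * (1 - m) ^ k) :=
    (hasSum_coe_mul_geometric_of_norm_lt_one hnorm).summable
  have hrw : (fun k : ℕ => (1 - m) ^ k * (a + m * ((k : ℝ) / q - (k : ℝ) * a / (1 - m))))
      = fun k : ℕ => a * (1 - m) ^ k + (m / q - m * a / (1 - m)) * ((k : ℝ) * (1 - m) ^ k) := by
    funext k
    field_simp
  rw [hrw, Summable.tsum_add (hsg.mul_left a) (hsk.mul_left _), tsum_mul_left, tsum_mul_left,
    tsum_geometric_of_lt_one (le_of_lt hx0) hx1,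
    tsum_coe_mul_geometric_of_norm_lt_one hnorm]
  have h1 : (1:ℝ) - (1 - m) = m := by ring
  rw [h1]
  field_simp
  ring
end

section
/- Let T be a nonnegative random variable with E[e^{qT}] < ∞ for q > 0. Then the capacities λ̄₁ = q/(e^{q E[T]} - 1), λ̄₂ = q/((E[e^{-qT}])^{-1} - 1), λ̄₃ = q/(E[e^{qT}] - 1) satisfy λ̄₂ ≥ λ̄₁ ≥ λ̄₃, where T is assumed non-degenerate so all denominators are positive. -/
/-! Both inequalities are Jensen's inequality for `exp`: `exp (q E[T]) ≤ E[exp (q T)]`, and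
`exp (-q E[T]) ≤ E[exp (-q T)]`, inverted to `E[exp (-q T)]⁻¹ ≤ exp (q E[T])`. Non-degeneracy of
`T` gives `E[exp (-q T)] < 1`, so all three denominators are positive and `a ↦ q / (a - 1)` is
antitone on `(1, ∞)`. -/

open MeasureTheory Real

section

variable {Ω : Type*} [MeasurableSpace Ω] {μ : Measure Ω}

theorem exp_integral_le_integral_exp [IsProbabilityMeasure μ] {f : Ω → ℝ}
    (hf : Integrable f μ) (hexp : Integrable (fun ω => exp (f ω)) μ) :
    exp (∫ ω, f ω ∂μ) ≤ ∫ ω, exp (f ω) ∂μ :=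
  convexOn_exp.map_integral_le continuous_exp.continuousOn isClosed_univ
    (.of_forall fun _ => Set.mem_univ _) hf hexp

theorem integrable_exp_neg_mul_of_nonneg [IsFiniteMeasure μ] {T : Ω → ℝ}
    (hT : AEStronglyMeasurable T μ) (hTnn : 0 ≤ᵐ[μ] T) {q : ℝ} (hq : 0 ≤ q) :
    Integrable (fun ω => exp (-q * T ω)) μ := by
  refine (integrable_const (1 : ℝ)).mono' (by fun_prop) ?_
  filter_upwards [hTnn] with ω hω
  rw [norm_of_nonneg (exp_pos _).le, exp_le_one_iff]
  exact mul_nonpos_of_nonpos_of_nonneg (neg_nonpos.2 hq) hω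

theorem integral_exp_neg_mul_lt_one [IsProbabilityMeasure μ] {T : Ω → ℝ}
    (hT : AEStronglyMeasurable T μ) (hTnn : 0 ≤ᵐ[μ] T) {q : ℝ} (hq : 0 < q)
    (hpos : 0 < μ {ω | 0 < T ω}) :
    ∫ ω, exp (-q * T ω) ∂μ < 1 := by
  have hint := integrable_exp_neg_mul_of_nonneg hT hTnn hq.le
  have hgap_int : Integrable (fun ω => 1 - exp (-q * T ω)) μ := (integrable_const 1).sub hint
  have hgap : 0 < ∫ ω, (1 - exp (-q * T ω)) ∂μ := by
    rw [integral_pos_iff_support_of_nonneg_ae _ hgap_int]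
    · refine hpos.trans_le (measure_mono fun ω (hω : 0 < T ω) => ?_)
      simp only [Function.mem_support, sub_ne_zero]
      exact (exp_lt_one_iff.2 (by nlinarith)).ne'
    · filter_upwards [hTnn] with ω hω
      simp only [Pi.zero_apply, sub_nonneg, exp_le_one_iff] at hω ⊢
      nlinarith
  rw [integral_sub (integrable_const 1) hint, integral_const, probReal_univ, one_smul] at hgap
  linarith

end

theorem capacity_ordering_general {Ω : Type*} [MeasurableSpace Ω] (μ : Measure Ω)
    [IsProbabilityMeasure μ] (T : Ω → ℝ) (q : ℝ) (hq : 0 < q)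
    (hTnn : ∀ ω, 0 ≤ T ω)
    (hTint : Integrable T μ)
    (hmgf : Integrable (fun ω => Real.exp (q * T ω)) μ)
    (hpos : 0 < μ {ω | 0 < T ω}) :
    q / ((∫ ω, Real.exp (-q * T ω) ∂μ)⁻¹ - 1) ≥ q / (Real.exp (q * ∫ ω, T ω ∂μ) - 1) ∧
    q / (Real.exp (q * ∫ ω, T ω ∂μ) - 1) ≥ q / ((∫ ω, Real.exp (q * T ω) ∂μ) - 1) := by
  have hTnn' : 0 ≤ᵐ[μ] T := .of_forall hTnn
  have hneg := integrable_exp_neg_mul_of_nonneg hTint.1 hTnn' hq.le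
  set I := ∫ ω, exp (-q * T ω) ∂μ
  have hI_inv : 1 < I⁻¹ :=
    one_lt_inv₀ (integral_exp_pos hneg) |>.2 (integral_exp_neg_mul_lt_one hTint.1 hTnn' hq hpos)
  have hjensen (c : ℝ) (hc : Integrable (fun ω => exp (c * T ω)) μ) :
      exp (c * ∫ ω, T ω ∂μ) ≤ ∫ ω, exp (c * T ω) ∂μ := by
    simpa only [integral_const_mul] using exp_integral_le_integral_exp (hTint.const_mul c) hc
  have hI_inv_le : I⁻¹ ≤ exp (q * ∫ ω, T ω ∂μ) := by
    rw [inv_le_comm₀ (integral_exp_pos hneg) (exp_pos _), ← exp_neg, ← neg_mul]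
    exact hjensen (-q) hneg
  have hmgf_ge := hjensen q hmgf
  constructor <;> exact div_le_div_of_nonneg_left hq.le (by linarith) (by linarith)

/-- Ordering of the capacities: `λ̄₂ ≥ λ̄₁ ≥ λ̄₃`, where
`λ̄₁ = q/(e^{q E[T]} - 1)`, `λ̄₂ = q/((E[e^{-qT}])⁻¹ - 1)`, `λ̄₃ = q/(E[e^{qT}] - 1)`,
for a nonnegative non-degenerate `T` with finite mgf at `q`. -/
theorem capacity_ordering {Ω : Type*} [MeasurableSpace Ω] (μ : Measure Ω)
    [IsProbabilityMeasure μ] (T : Ω → ℝ) (q : ℝ) (hq : 0 < q)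
    (hTnn : ∀ ω, 0 ≤ T ω)
    (hTmeas : Measurable T)
    (hTint : Integrable T μ)
    (hmgf : Integrable (fun ω => Real.exp (q * T ω)) μ)
    (hpos : 0 < μ {ω | 0 < T ω}) :
    q / ((∫ ω, Real.exp (-q * T ω) ∂μ)⁻¹ - 1) ≥ q / (Real.exp (q * ∫ ω, T ω ∂μ) - 1) ∧
    q / (Real.exp (q * ∫ ω, T ω ∂μ) - 1) ≥ q / ((∫ ω, Real.exp (q * T ω) ∂μ) - 1) :=
  capacity_ordering_general μ T q hq hTnn hTint hmgf hpos
end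

section
/- Let T have a Gamma distribution with shape k ∈ (0,1) and rate θ > 0. Then the capacity λ̄₂(q) = q/((E[e^{-qT}])^{-1} - 1) = q/((1+q/θ)^k - 1) is strictly increasing in q on (0,∞) and tends to ∞ as q → ∞. -/
/-!
With `x = 1 + q / θ` the capacity is `θ * (x - 1) / (x ^ k - 1)`, i.e. `θ` divided by the slope of
the secant of the strictly concave function `x ↦ x ^ k` between `1` and `x`. That slope decreases
strictly in `x`, so the capacity increases; and `x ^ k - 1 ≤ x ^ k` gives the lower bound
`x ^ (1 - k) - 1`, which tends to infinity since `k < 1`.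
-/

open Real Filter Set

lemma rpow_secant_slope_strictAntiOn {k : ℝ} (hk0 : 0 < k) (hk1 : k < 1) :
    StrictAntiOn (fun x : ℝ => (x ^ k - 1) / (x - 1)) (Ioi 1) := by
  intro x hx y hy hxy
  have h := (strictConcaveOn_rpow hk0 hk1).secant_strict_mono (a := 1) (by simp)
    (mem_Ici.2 (zero_le_one.trans hx.out.le))
    (mem_Ici.2 (zero_le_one.trans hy.out.le)) hx.out.ne' hy.out.ne' hxy
  simpa only [one_rpow] using h

lemma rpow_secant_inv_strictMonoOn {k : ℝ} (hk0 : 0 < k) (hk1 : k < 1) :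
    StrictMonoOn (fun x : ℝ => (x - 1) / (x ^ k - 1)) (Ioi 1) := by
  intro x hx y hy hxy
  have hslope_pos : 0 < (y ^ k - 1) / (y - 1) :=
    div_pos (sub_pos.2 (one_lt_rpow hy hk0)) (sub_pos.2 hy)
  have hslope := rpow_secant_slope_strictAntiOn hk0 hk1 hx hy hxy
  simpa only [inv_div] using (inv_lt_inv₀ (hslope_pos.trans hslope) hslope_pos).2 hslope

lemma sub_one_rpow_le_rpow_secant_inv {k x : ℝ} (hk0 : 0 < k) (hx : 1 < x) :
    x ^ (1 - k) - 1 ≤ (x - 1) / (x ^ k - 1) := by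
  have hx0 : 0 < x := one_pos.trans hx
  have hxk : 1 < x ^ k := one_lt_rpow hx hk0
  calc x ^ (1 - k) - 1 ≤ x ^ (1 - k) - 1 / x ^ k := by
        gcongr; exact div_le_one_of_le₀ hxk.le (by positivity)
    _ = (x - 1) / x ^ k := by rw [rpow_sub hx0, rpow_one, sub_div]
    _ ≤ (x - 1) / (x ^ k - 1) := by
        gcongr
        linarith

lemma tendsto_rpow_secant_inv_atTop {k : ℝ} (hk0 : 0 < k) (hk1 : k < 1) :
    Tendsto (fun x : ℝ => (x - 1) / (x ^ k - 1)) atTop atTop :=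
  tendsto_atTop_mono' _ ((eventually_gt_atTop 1).mono fun _ hx =>
      sub_one_rpow_le_rpow_secant_inv hk0 hx)
    (tendsto_atTop_add_const_right _ _ (tendsto_rpow_atTop (by linarith)))

/-- For `T ~ Gamma(k, θ)` with `0 < k < 1`, the capacity
`λ̄₂(q) = q/((1+q/θ)^k - 1)` is strictly increasing on `(0,∞)` and tends to `∞`. -/
theorem gamma_headway_B2_capacity (k θ : ℝ) (hk0 : 0 < k) (hk1 : k < 1) (hθ : 0 < θ) :
    StrictMonoOn (fun q : ℝ => q / ((1 + q / θ) ^ k - 1)) (Set.Ioi (0:ℝ)) ∧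
    Tendsto (fun q : ℝ => q / ((1 + q / θ) ^ k - 1)) atTop atTop := by
  have hcapacity_eq : (fun q : ℝ => q / ((1 + q / θ) ^ k - 1))
      = fun q => θ * ((1 + q / θ - 1) / ((1 + q / θ) ^ k - 1)) := by
    ext q; rw [add_sub_cancel_left, mul_div_assoc', mul_div_cancel₀ _ hθ.ne']
  rw [hcapacity_eq]
  refine ⟨fun p hp q hq hpq => ?_, ?_⟩
  · have hmaps : ∀ q ∈ Ioi (0 : ℝ), 1 + q / θ ∈ Ioi (1 : ℝ) := fun q hq =>
      lt_add_of_pos_right 1 (div_pos hq hθ)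
    exact mul_lt_mul_of_pos_left (rpow_secant_inv_strictMonoOn hk0 hk1 (hmaps p hp) (hmaps q hq)
      (by gcongr)) hθ
  · exact (tendsto_rpow_secant_inv_atTop hk0 hk1).comp
      (tendsto_atTop_add_const_left _ _ (tendsto_id.atTop_div_const hθ)) |>.const_mul_atTop hθ
end

section
/- There exist nonnegative random variables T_A and T_B with E[T_A] < E[T_B], both with finite moment generating functions, and a value q > 0 such that q/(E[e^{q T_A}] - 1) < q/(E[e^{q T_B}] - 1); concretely, with T_A taking values 4 and 34 with probabilities 9/10 and 1/10, and T_B taking values 6 and 10 each with probability 1/2, the inequality E[e^{q T_A}] > E[e^{q T_B}] holds for all sufficiently large q > 0. -/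
open Real Filter

lemma mean_headway_key (q : ℝ) (hq : 1 ≤ q) :
    (1/2 : ℝ) * Real.exp (q * 6) + (1/2) * Real.exp (q * 10)
      < (9/10 : ℝ) * Real.exp (q * 4) + (1/10) * Real.exp (q * 34) := by
  have h1 : Real.exp (q * 6) ≤ Real.exp (q * 10) := Real.exp_le_exp.mpr (by nlinarith)
  have h2 : Real.exp (q * 34) = Real.exp (q * 10) * Real.exp (q * 24) := by
    rw [← Real.exp_add]; ring_nf
  have h3 : (25 : ℝ) ≤ Real.exp (q * 24) :=
    le_trans (by nlinarith) (Real.add_one_le_exp _)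
  have h4 : 0 < Real.exp (q * 4) := Real.exp_pos _
  have h5 : 0 < Real.exp (q * 10) := Real.exp_pos _
  nlinarith

/-- Paradox for model B₃: with `T_A ∈ {4, 34}` w.p. `{9/10, 1/10}` (mean 7) and
`T_B ∈ {6, 10}` each w.p. `1/2` (mean 8), `E[e^{q T_A}] > E[e^{q T_B}]` for all
sufficiently large `q`, and there is a `q > 0` with
`q/(E[e^{q T_A}] - 1) < q/(E[e^{q T_B}] - 1)` despite `E[T_A] < E[T_B]`. -/
theorem mean_headway_paradox :
    ((9/10 : ℝ) * 4 + (1/10) * 34 < (1/2 : ℝ) * 6 + (1/2) * 10) ∧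
    (∀ᶠ q : ℝ in atTop,
      (9/10 : ℝ) * Real.exp (q * 4) + (1/10) * Real.exp (q * 34)
        > (1/2 : ℝ) * Real.exp (q * 6) + (1/2) * Real.exp (q * 10)) ∧
    (∃ q : ℝ, 0 < q ∧
      q / ((9/10 : ℝ) * Real.exp (q * 4) + (1/10) * Real.exp (q * 34) - 1)
        < q / ((1/2 : ℝ) * Real.exp (q * 6) + (1/2) * Real.exp (q * 10) - 1)) := by
  refine ⟨by norm_num, ?_, ?_⟩
  · filter_upwards [eventually_ge_atTop (1 : ℝ)] with q hq
    exact mean_headway_key q hq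
  · refine ⟨1, one_pos, ?_⟩
    have hkey := mean_headway_key 1 le_rfl
    norm_num at hkey ⊢
    have h6 : (7 : ℝ) ≤ Real.exp 6 := le_trans (by norm_num) (Real.add_one_le_exp _)
    have h10 : (0 : ℝ) < Real.exp 10 := Real.exp_pos _
    have hB : (0 : ℝ) < (1/2 : ℝ) * Real.exp 6 + (1/2) * Real.exp 10 - 1 := by linarith
    have := div_lt_div_of_pos_left one_pos hB
      (show (1/2 : ℝ) * Real.exp 6 + (1/2) * Real.exp 10 - 1
          < (9/10 : ℝ) * Real.exp 4 + (1/10) * Real.exp 34 - 1 by linarith)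
    simpa [one_div] using this
end

section
/- In the constant-gap model B₁ with impatience, if the critical headways satisfy T_1 ≥ T_2 ≥ ⋯ ≥ T_min > 0, then the mean service time E[Y] = Σ_{k=0}^∞ e^{-q T_{k+1}} [k/q + T_{k+1} - Σ_{i=1}^k T_i e^{-q T_i}/(1 - e^{-q T_i})] ∏_{j=1}^k (1 - e^{-q T_j}) is finite, and satisfies E[Y] ≤ (e^{q T_1} - 1)/q. -/
/-!
Write `p_k = e^{-q T_k}` for the probability that attempt `k + 1` succeeds, `W_k = ∏_{j<k} (1 - p_j)`
for the probability that the first `k` attempts fail, and `m_j = 1/q - T_j p_j / (1 - p_j)` for the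
mean of an exponential lag of rate `q` conditioned to be shorter than `T_j`. The `k`-th term of the
series is `p_k (T_k + S_k) W_k` with `S_k = ∑_{j<k} m_j`, and since `(1 - p_k) m_k = (1 - p_k)/q - T_k p_k`
it equals `W_{k+1}/q + W_k S_k - W_{k+1} S_{k+1}`. The series therefore telescopes:
its partial sums are at most `(1/q) ∑_k W_{k+1}`, and `W_{k+1} ≤ (1 - p_0)^{k+1}` because the headways
decrease, which gives the geometric bound `(1 - p_0)/(q p_0) = (e^{q T_0} - 1)/q`.
-/

open Real Finset

namespace GapAcceptance

noncomputable def truncExpMean (q t : ℝ) : ℝ :=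
  1 / q - t * exp (-q * t) / (1 - exp (-q * t))

noncomputable def failProb (q : ℝ) (T : ℕ → ℝ) (k : ℕ) : ℝ :=
  ∏ j ∈ range k, (1 - exp (-q * T j))

noncomputable def serviceTerm (q : ℝ) (T : ℕ → ℝ) (k : ℕ) : ℝ :=
  exp (-q * T k) *
      ((k : ℝ) / q + T k - ∑ i ∈ range k, T i * exp (-q * T i) / (1 - exp (-q * T i))) *
    failProb q T k

variable {q t : ℝ} {T : ℕ → ℝ}

lemma failProb_succ (k : ℕ) :
    failProb q T (k + 1) = failProb q T k * (1 - exp (-q * T k)) :=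
  prod_range_succ _ _

lemma one_sub_exp_nonneg (hq : 0 ≤ q) (ht : 0 ≤ t) : 0 ≤ 1 - exp (-q * t) :=
  sub_nonneg.2 <| exp_le_one_iff.2 <| by nlinarith

lemma failProb_nonneg (hq : 0 ≤ q) (hT : ∀ j, 0 ≤ T j) (k : ℕ) : 0 ≤ failProb q T k :=
  prod_nonneg fun j _ => one_sub_exp_nonneg hq (hT j)

lemma one_sub_exp_mul_truncExpMean (hq : q ≠ 0) (t : ℝ) :
    (1 - exp (-q * t)) * truncExpMean q t = (1 - exp (-q * t)) / q - t * exp (-q * t) := by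
  rcases eq_or_ne t 0 with rfl | ht
  · simp -- the quotient in `truncExpMean q 0` is `0 / 0 = 0`
  have ha : 1 - exp (-q * t) ≠ 0 := by
    rw [sub_ne_zero, ne_comm, Ne, exp_eq_one_iff]
    simpa using And.intro hq ht
  rw [truncExpMean, mul_sub, mul_div_cancel₀ _ ha, mul_one_div]

lemma truncExpMean_nonneg (hq : 0 < q) (ht : 0 < t) : 0 ≤ truncExpMean q t := by
  have ha : 0 < 1 - exp (-q * t) := by
    rw [sub_pos, exp_lt_one_iff]
    nlinarith
  have hexp : q * t * exp (-q * t) ≤ 1 - exp (-q * t) := by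
    have h := add_one_le_exp (q * t)
    have hinv : exp (q * t) * exp (-q * t) = 1 := by rw [← exp_add]; simp
    nlinarith [exp_pos (-q * t)]
  rw [truncExpMean, sub_nonneg, div_le_div_iff₀ ha hq]
  linarith

lemma sum_range_truncExpMean (k : ℕ) :
    ∑ j ∈ range k, truncExpMean q (T j) =
      (k : ℝ) / q - ∑ i ∈ range k, T i * exp (-q * T i) / (1 - exp (-q * T i)) := by
  simp only [truncExpMean, sum_sub_distrib, sum_const, card_range, nsmul_eq_mul]
  ring

lemma serviceTerm_eq (k : ℕ) :
    serviceTerm q T k =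
      exp (-q * T k) * (T k + ∑ j ∈ range k, truncExpMean q (T j)) * failProb q T k := by
  rw [serviceTerm, sum_range_truncExpMean]
  ring

lemma serviceTerm_nonneg (hq : 0 < q) (hT : ∀ k, 0 < T k) (k : ℕ) : 0 ≤ serviceTerm q T k := by
  have hfail := failProb_nonneg hq.le (fun j => (hT j).le) k
  have hmean : 0 ≤ ∑ j ∈ range k, truncExpMean q (T j) :=
    sum_nonneg fun j _ => truncExpMean_nonneg hq (hT j)
  have hTk := hT k
  rw [serviceTerm_eq]
  positivity

lemma serviceTerm_eq_telescope (hq : q ≠ 0) (k : ℕ) :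
    serviceTerm q T k =
      failProb q T (k + 1) / q +
        (failProb q T k * ∑ j ∈ range k, truncExpMean q (T j) -
          failProb q T (k + 1) * ∑ j ∈ range (k + 1), truncExpMean q (T j)) := by
  rw [serviceTerm_eq, failProb_succ, sum_range_succ]
  linear_combination failProb q T k * one_sub_exp_mul_truncExpMean hq (T k)

lemma sum_range_serviceTerm (hq : q ≠ 0) (n : ℕ) :
    ∑ k ∈ range n, serviceTerm q T k =
      (∑ k ∈ range n, failProb q T (k + 1)) / q -
        failProb q T n * ∑ j ∈ range n, truncExpMean q (T j) := by
  simp only [serviceTerm_eq_telescope hq, sum_add_distrib, ← sum_div,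
    sum_range_sub' (fun k => failProb q T k * ∑ j ∈ range k, truncExpMean q (T j))]
  simp [failProb, sub_eq_add_neg]

lemma failProb_le_pow (hq : 0 ≤ q) (hT : ∀ j, 0 ≤ T j) (hTt : ∀ j, T j ≤ t) (k : ℕ) :
    failProb q T k ≤ (1 - exp (-q * t)) ^ k := by
  calc failProb q T k ≤ ∏ _j ∈ range k, (1 - exp (-q * t)) :=
        prod_le_prod (fun j _ => one_sub_exp_nonneg hq (hT j))
          fun j _ => sub_le_sub_left (exp_le_exp.2 <| by nlinarith [hTt j]) 1
    _ = (1 - exp (-q * t)) ^ k := by rw [prod_const, card_range]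

lemma sum_range_failProb_succ_le (hq : 0 ≤ q) (hT : ∀ j, 0 ≤ T j) (hTt : ∀ j, T j ≤ t) (n : ℕ) :
    ∑ k ∈ range n, failProb q T (k + 1) ≤ exp (q * t) - 1 := by
  set a := 1 - exp (-q * t)
  have ha : 0 ≤ a := one_sub_exp_nonneg hq ((hT 0).trans (hTt 0))
  have hgeom : ∑ k ∈ range n, a ^ k ≤ 1 / (1 - a) := by
    have := geom_sum_Ico_le_of_lt_one (m := 0) (n := n) ha (sub_lt_self 1 (exp_pos _))
    rwa [← range_eq_Ico, pow_zero] at this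
  have hratio : 1 / (1 - a) * a = exp (q * t) - 1 := by
    simp only [a, sub_sub_cancel, one_div, ← exp_neg, neg_mul, neg_neg, mul_sub, mul_one]
    rw [← exp_add, add_neg_cancel, exp_zero]
  calc ∑ k ∈ range n, failProb q T (k + 1) ≤ ∑ k ∈ range n, a ^ k * a :=
        sum_le_sum fun k _ => pow_succ a k ▸ failProb_le_pow hq hT hTt (k + 1)
    _ = (∑ k ∈ range n, a ^ k) * a := (sum_mul _ _ _).symm
    _ ≤ 1 / (1 - a) * a := mul_le_mul_of_nonneg_right hgeom ha
    _ = exp (q * t) - 1 := hratio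

lemma sum_range_serviceTerm_le (hq : 0 < q) (hT : ∀ k, 0 < T k) (hTt : ∀ k, T k ≤ t) (n : ℕ) :
    ∑ k ∈ range n, serviceTerm q T k ≤ (exp (q * t) - 1) / q := by
  have htail : 0 ≤ failProb q T n * ∑ j ∈ range n, truncExpMean q (T j) :=
    mul_nonneg (failProb_nonneg hq.le (fun j => (hT j).le) n)
      (sum_nonneg fun j _ => truncExpMean_nonneg hq (hT j))
  have hhead := div_le_div_of_nonneg_right
    (sum_range_failProb_succ_le hq.le (fun j => (hT j).le) hTt n) hq.le
  rw [sum_range_serviceTerm hq.ne']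
  linarith

end GapAcceptance

open GapAcceptance

/-- Model B₁ with impatience: for nonincreasing critical headways `T 0 ≥ T 1 ≥ ⋯ ≥ Tmin > 0`
(0-indexed, `T k` is the headway at attempt `k+1`), the mean service time series
`Σ_k e^{-q T_{k+1}} [k/q + T_{k+1} - Σ_{i=1}^k T_i e^{-q T_i}/(1 - e^{-q T_i})] ∏_{j=1}^k (1 - e^{-q T_j})`
converges, and its sum is at most `(e^{q T_1} - 1)/q`. -/
theorem mean_service_time_B1_impatience (q Tmin : ℝ) (T : ℕ → ℝ) (hq : 0 < q)
    (hmono : ∀ k : ℕ, T (k + 1) ≤ T k) (hmin : ∀ k : ℕ, Tmin ≤ T k) (hminpos : 0 < Tmin) :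
    Summable (fun k : ℕ =>
      Real.exp (-q * T k) *
        ((k : ℝ) / q + T k -
          ∑ i ∈ Finset.range k, T i * Real.exp (-q * T i) / (1 - Real.exp (-q * T i))) *
        ∏ j ∈ Finset.range k, (1 - Real.exp (-q * T j))) ∧
    ∑' k : ℕ,
      Real.exp (-q * T k) *
        ((k : ℝ) / q + T k -
          ∑ i ∈ Finset.range k, T i * Real.exp (-q * T i) / (1 - Real.exp (-q * T i))) *
        ∏ j ∈ Finset.range k, (1 - Real.exp (-q * T j))
      ≤ (Real.exp (q * T 0) - 1) / q := by
  have hT : ∀ k, 0 < T k := fun k => hminpos.trans_le (hmin k)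
  have hT0 : ∀ k, T k ≤ T 0 := fun k => antitone_nat_of_succ_le hmono k.zero_le
  have hpartial := sum_range_serviceTerm_le hq hT hT0
  have hsum : Summable (serviceTerm q T) :=
    summable_of_sum_range_le (serviceTerm_nonneg hq hT) hpartial
  exact ⟨hsum, hsum.tsum_le_of_sum_range_le hpartial⟩
end
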